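/- Cardinality bound: 𝓘_{XY} = { (I(X;U), I(Y;U), I(X,Y;U)) : U an auxiliary random variable whose range has at most |𝒳|·|𝒴| + 2 elements }; i.e., every point of the mutual information region is achieved by some U with |𝒰| ≤ |𝒳|·|𝒴| + 2. -/

import Mathlib

/-!
Write an auxiliary `U` as a mixture: `U` has law `w`, and given `U = u` the pair `(X, Y)` has
law `ρ u`. Then `I(X;U) = H(X) - ∑ᵤ w u H(X | U = u)`, and likewise for `Y` and `(X, Y)`, so the
marginal `p` and the point of `𝓘_{XY}` depend only on the `w`-average of the vectors
`(ρ u off one coordinate, H(X | U = u), H(Y | U = u), H(X, Y | U = u))` of dimension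
`|𝒳| |𝒴| + 2`. That average lies in the convex hull of the image of the probability simplex, a
path-connected set, so by the Fenchel–Eggleston strengthening of Carathéodory's theorem it is
already an average of at most `|𝒳| |𝒴| + 2` points of the image: these are the values of the
new `U`.
-/

open scoped BigOperators Pointwise Classical

noncomputable section

namespace GW

/-- A probability mass function on a finite type. -/
def IsPMF {α : Type} [Fintype α] (p : α → ℝ) : Prop :=
  (∀ a, 0 ≤ p a) ∧ ∑ a, p a = 1

/-- Distribution (pmf) of the random variable `f` under the pmf `p`. -/
def dist {α β : Type} [Fintype α] (p : α → ℝ) (f : α → β) : β → ℝ :=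
  fun b => ∑ a, if f a = b then p a else 0

/-- Shannon entropy (base 2) of the random variable `f` under the pmf `p`. -/
def H {α β : Type} [Fintype α] [Fintype β] (p : α → ℝ) (f : α → β) : ℝ :=
  ∑ b, -(dist p f b * Real.logb 2 (dist p f b))

/-- Mutual information `I(f; g)` under `p`. -/
def I2 {α β γ : Type} [Fintype α] [Fintype β] [Fintype γ]
    (p : α → ℝ) (f : α → β) (g : α → γ) : ℝ :=
  H p f + H p g - H p (fun a => (f a, g a))

/-- Conditional entropy `H(f | g)` under `p`. -/
def Hc {α β γ : Type} [Fintype α] [Fintype β] [Fintype γ]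
    (p : α → ℝ) (f : α → β) (g : α → γ) : ℝ :=
  H p (fun a => (f a, g a)) - H p g

/-- Conditional mutual information `I(f; g | h)` under `p`. -/
def Ic {α β γ δ : Type} [Fintype α] [Fintype β] [Fintype γ] [Fintype δ]
    (p : α → ℝ) (f : α → β) (g : α → γ) (h : α → δ) : ℝ :=
  Hc p f h + Hc p g h - Hc p (fun a => (f a, g a)) h

/-- Independence of the random variables `f` and `g` under `p`. -/
def Indep {α β γ : Type} [Fintype α] (p : α → ℝ) (f : α → β) (g : α → γ) : Prop :=
  ∀ b c, dist p (fun a => (f a, g a)) (b, c) = dist p f b * dist p g c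

/-- `q` is a joint pmf on `X × Y × U` whose `(X,Y)`-marginal is `p`; i.e. `U` is an
auxiliary random variable defined jointly with `(X,Y)` via a conditional pmf `p_{U|XY}`. -/
def IsAux {X Y U : Type} [Fintype X] [Fintype Y] [Fintype U]
    (p : X × Y → ℝ) (q : X × Y × U → ℝ) : Prop :=
  IsPMF q ∧ ∀ x y, (∑ u, q (x, y, u)) = p (x, y)

/-- Coordinate map onto `X`. -/
def cX {X Y U : Type} : X × Y × U → X := fun a => a.1
/-- Coordinate map onto `Y`. -/
def cY {X Y U : Type} : X × Y × U → Y := fun a => a.2.1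
/-- Coordinate map onto `U`. -/
def cU {X Y U : Type} : X × Y × U → U := fun a => a.2.2
/-- Coordinate map onto `X × Y`. -/
def cXY {X Y U : Type} : X × Y × U → X × Y := fun a => (a.1, a.2.1)

/-- The mutual information region `𝓘_{XY}`. -/
def MIRegion {X Y : Type} [Fintype X] [Fintype Y] (p : X × Y → ℝ) : Set (ℝ × ℝ × ℝ) :=
  { v | ∃ (U : Type) (_ : Fintype U) (q : X × Y × U → ℝ), IsAux p q ∧
      v = (I2 q cX cU, I2 q cY cU, I2 q cXY cU) }

/-- The outer region `𝓘ᵒ_{XY}`. -/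
def OuterRegion {X Y : Type} [Fintype X] [Fintype Y] (p : X × Y → ℝ) : Set (ℝ × ℝ × ℝ) :=
  { v | 0 ≤ v.1 ∧ 0 ≤ v.2.1 ∧ v.1 + v.2.1 - v.2.2 ≤ I2 p Prod.fst Prod.snd ∧
        0 ≤ v.2.2 - v.2.1 ∧ v.2.2 - v.2.1 ≤ Hc p Prod.fst Prod.snd ∧
        0 ≤ v.2.2 - v.1 ∧ v.2.2 - v.1 ≤ Hc p Prod.snd Prod.fst }

/-- Maximal interaction information `G_NNI(X; Y)`. -/
def GNNI {X Y : Type} [Fintype X] [Fintype Y] (p : X × Y → ℝ) : ℝ :=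
  sSup { r | ∃ (U : Type) (_ : Fintype U) (q : X × Y × U → ℝ), IsAux p q ∧
      r = Ic q cX cY cU - I2 p Prod.fst Prod.snd }

/-- Asymmetric private interaction information `G_PNI(X → Y)`. -/
def GPNI {X Y : Type} [Fintype X] [Fintype Y] (p : X × Y → ℝ) : ℝ :=
  sSup { r | ∃ (U : Type) (_ : Fintype U) (q : X × Y × U → ℝ), IsAux p q ∧
      Indep q cU cX ∧ r = Ic q cX cY cU - I2 p Prod.fst Prod.snd }

/-- Symmetric private interaction information `G_PPI(X; Y)`. -/
def GPPI {X Y : Type} [Fintype X] [Fintype Y] (p : X × Y → ℝ) : ℝ :=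
  sSup { r | ∃ (U : Type) (_ : Fintype U) (q : X × Y × U → ℝ), IsAux p q ∧
      Indep q cU cX ∧ Indep q cU cY ∧ r = Ic q cX cY cU - I2 p Prod.fst Prod.snd }

open Finset Function Module Filter Topology

section FiniteSums

variable {ι : Type*} [Fintype ι]

lemma sum_update_of_eq_zero [DecidableEq ι] {M : Type*} [AddCommMonoid M]
    {f : ι → M} {i₀ : ι} (h : f i₀ = 0) (a : M) : ∑ i, update f i₀ a i = a + ∑ i, f i := by
  rw [sum_update_of_mem (mem_univ i₀), sum_eq_sum_sdiff_singleton_add (mem_univ i₀) f, h, add_zero]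

lemma eq_of_sum_eq_of_forall_ne {M : Type*} [AddCommGroup M] {f g : ι → M} (i₀ : ι)
    (hsum : ∑ i, f i = ∑ i, g i) (h : ∀ i ≠ i₀, f i = g i) : f = g := by
  ext i
  by_cases hi : i = i₀
  · subst hi
    rw [← add_sum_erase _ f (mem_univ i), ← add_sum_erase _ g (mem_univ i),
      sum_congr rfl fun j hj => h j (ne_of_mem_erase hj)] at hsum
    exact add_right_cancel hsum
  · exact h i hi

end FiniteSums

section FenchelEggleston

variable {ι E : Type*}

lemma sum_smul_mem_convexHull_image [AddCommGroup E] [Module ℝ E] (s : Finset ι) (P : ι → E)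
    {v : ι → ℝ} (hv₀ : ∀ i ∈ s, 0 ≤ v i) (hv₁ : ∑ i ∈ s, v i = 1) :
    ∑ i ∈ s, v i • P i ∈ convexHull ℝ (↑(s.image P) : Set E) :=
  (convex_convexHull ℝ _).sum_mem hv₀ hv₁ fun _ hi =>
    subset_convexHull ℝ _ (Finset.mem_coe.2 (mem_image_of_mem P hi))

lemma exists_card_lt_or_affineIndependent [AddCommGroup E] [Module ℝ E] [Fintype ι]
    {Q : ι → E} {v : ι → ℝ} {x : E} (hv : v ∈ stdSimplex ℝ ι) (hx : ∑ i, v i • Q i = x) :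
    (∃ t : Finset E, ↑t ⊆ Set.range Q ∧ #t < Fintype.card ι ∧ x ∈ convexHull ℝ (t : Set E)) ∨
      (AffineIndependent ℝ Q ∧ ∀ i, 0 < v i) := by
  have hrange : (↑(univ.image Q) : Set E) = Set.range Q := by simp
  by_cases hQ : AffineIndependent ℝ Q
  · by_cases hpos : ∀ i, 0 < v i
    · exact Or.inr ⟨hQ, hpos⟩
    obtain ⟨i, hi⟩ := not_forall.1 hpos
    have hvi : v i = 0 := le_antisymm (not_lt.1 hi) (hv.1 i)
    refine Or.inl ⟨(univ.erase i).image Q, ?_,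
      card_image_le.trans_lt (card_erase_lt_of_mem (mem_univ i)), ?_⟩
    · exact (Finset.coe_subset.2 (image_subset_image (erase_subset i univ))).trans hrange.subset
    · rw [← hx, ← Finset.sum_erase (f := fun j => v j • Q j) (a := i) _ (by simp [hvi])]
      refine sum_smul_mem_convexHull_image _ _ (fun j _ => hv.1 j) ?_
      rw [Finset.sum_erase _ hvi, hv.2]
  · left
    have hx' : x ∈ convexHull ℝ (↑(univ.image Q) : Set E) :=
      hx ▸ sum_smul_mem_convexHull_image _ _ (fun j _ => hv.1 j) hv.2
    by_cases hinj : Injective Q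
    · have hdep : ¬AffineIndependent ℝ ((↑) : univ.image Q → E) := fun h =>
        hQ ((h.mono (s := Set.range Q) hrange.superset).of_set_of_injective hinj)
      obtain ⟨y, hy⟩ := Caratheodory.mem_convexHull_erase hdep hx'
      refine ⟨(univ.image Q).erase y, ?_, ?_, hy⟩
      · exact (Finset.coe_subset.2 (erase_subset _ _)).trans hrange.subset
      · exact (card_erase_lt_of_mem y.2).trans_le card_image_le
    · refine ⟨univ.image Q, hrange.subset, card_image_le.lt_of_ne fun h => hinj ?_, hx'⟩
      simpa using card_image_iff.1 h

/-- The weights of `∑ i, v i • b i` after the vertex `b i₀` is exchanged for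
`∑ i, c i • b i`, as in a pivot step of the simplex method. -/
def pivotWeights [DecidableEq ι] (v c : ι → ℝ) (i₀ : ι) : ι → ℝ :=
  update (fun i => v i - v i₀ / c i₀ * c i) i₀ (v i₀ / c i₀)

section pivot

variable [Fintype ι] [DecidableEq ι] {v c : ι → ℝ} {i₀ : ι}

lemma sum_pivotWeights (hc : ∑ i, c i = 1) (hc₀ : c i₀ ≠ 0) :
    ∑ i, pivotWeights v c i₀ i = ∑ i, v i := by
  rw [pivotWeights, sum_update_of_eq_zero (f := fun i => v i - v i₀ / c i₀ * c i)
    (by rw [div_mul_cancel₀ _ hc₀, sub_self]), sum_sub_distrib,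
    ← mul_sum, hc]
  ring

lemma sum_pivotWeights_smul_update [AddCommGroup E] [Module ℝ E] (b : ι → E) (hc₀ : c i₀ ≠ 0) :
    ∑ i, pivotWeights v c i₀ i • update b i₀ (∑ j, c j • b j) i = ∑ i, v i • b i := by
  simp only [pivotWeights, apply_update₂ (fun _ (r : ℝ) (e : E) => r • e)]
  rw [sum_update_of_eq_zero (f := fun i => (v i - v i₀ / c i₀ * c i) • b i)
    (by rw [div_mul_cancel₀ _ hc₀, sub_self, zero_smul])]
  simp only [sub_smul, sum_sub_distrib, mul_smul, ← smul_sum]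
  abel

end pivot

lemma eventually_exists_stdSimplex_sum_smul_update [Fintype ι] [DecidableEq ι]
    [NormedAddCommGroup E] [NormedSpace ℝ E] [FiniteDimensional ℝ E] {α : Type*}
    [TopologicalSpace α] (b : AffineBasis ι ℝ E) {v : ι → ℝ} (hv : ∀ i, 0 < v i)
    (hv₁ : ∑ i, v i = 1) {i₀ : ι} {c : α → E} {t : α} (hc : ContinuousAt c t) (hct : c t = b i₀) :
    ∀ᶠ s in 𝓝 t, ∃ v' ∈ stdSimplex ℝ ι, ∑ i, v' i • update (⇑b) i₀ (c s) i = ∑ i, v i • b i := by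
  set g : α → ι → ℝ := fun s => pivotWeights v (fun i => b.coord i (c s)) i₀
  have hcoord : ∀ i, ContinuousAt (fun s => b.coord i (c s)) t := fun i =>
    (continuous_barycentric_coord b i).continuousAt.comp hc
  have hcoord₀ : b.coord i₀ (c t) ≠ 0 := by simp [hct]
  have hg : ∀ i, ContinuousAt (fun s => g s i) t := by
    intro i
    simp only [g, pivotWeights, update_apply]
    split_ifs
    · exact continuousAt_const.div (hcoord i₀) hcoord₀
    · exact continuousAt_const.sub ((continuousAt_const.div (hcoord i₀) hcoord₀).mul (hcoord i))
  have hgt : g t = v := by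
    ext i
    by_cases hi : i = i₀
    · subst hi; simp [g, pivotWeights, hct]
    · simp [g, pivotWeights, hct, hi, b.coord_apply_ne hi]
  have hpos : ∀ᶠ s in 𝓝 t, ∀ i, 0 < g s i :=
    eventually_all.2 fun i => (hg i).eventually (lt_mem_nhds (by simpa [hgt] using hv i))
  have hne : ∀ᶠ s in 𝓝 t, b.coord i₀ (c s) ≠ 0 := (hcoord i₀).eventually_ne hcoord₀
  filter_upwards [hpos, hne] with s hs hs₀
  refine ⟨g s, ⟨fun i => (hs i).le, ?_⟩, ?_⟩
  · rw [sum_pivotWeights (b.sum_coord_apply_eq_one _) hs₀, hv₁]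
  · conv_lhs => rw [← b.linear_combination_coord_eq_self (c s)]
    exact sum_pivotWeights_smul_update b hs₀

lemma isCompact_setOf_exists_mem_apply_eq {α β : Type*} [TopologicalSpace α] [TopologicalSpace β]
    [TopologicalSpace E] [T1Space E] {K : Set α} {L : Set β} (hK : IsCompact K)
    (hL : IsCompact L) {F : α → β → E} (hF : Continuous (uncurry F)) (x : E) :
    IsCompact {s ∈ K | ∃ v ∈ L, F s v = x} := by
  have h : {s ∈ K | ∃ v ∈ L, F s v = x} = Prod.fst '' (K ×ˢ L ∩ uncurry F ⁻¹' {x}) := by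
    ext s
    simp [and_assoc]
  rw [h]
  exact ((hK.prod hL).inter_right (isClosed_singleton.preimage hF)).image continuous_fst

variable [NormedAddCommGroup E] [NormedSpace ℝ E] [FiniteDimensional ℝ E]

/- Slide the vertex `z i₀` along `c` as long as `x` stays in the convex hull. At the last time
either `x` is a convex combination of fewer vertices, or the simplex is nondegenerate with `x`
in its interior, and then the vertex can slide further. -/
lemma exists_finset_card_lt_of_update_path [Fintype ι] [DecidableEq ι] {S : Set E} {z : ι → E}
    {i₀ i₁ : ι} (hi : i₀ ≠ i₁) (hcard : Fintype.card ι = finrank ℝ E + 1) (hzS : ∀ i, z i ∈ S)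
    {c : ℝ → E} (hc : Continuous c) (hcS : ∀ s, c s ∈ S) (hc₀ : c 0 = z i₀) (hc₁ : c 1 = z i₁)
    {x : E} (hx : ∃ v ∈ stdSimplex ℝ ι, ∑ i, v i • z i = x) :
    ∃ t : Finset E, ↑t ⊆ S ∧ #t < Fintype.card ι ∧ x ∈ convexHull ℝ (t : Set E) := by
  set P : ℝ → ι → E := fun s => update z i₀ (c s)
  have hPS : ∀ s i, P s i ∈ S := fun s i => by
    simp only [P, update_apply]; split_ifs <;> simp [hcS, hzS]
  set T := {s ∈ Set.Icc (0 : ℝ) 1 | ∃ v ∈ stdSimplex ℝ ι, ∑ i, v i • P s i = x}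
  have hT : IsCompact T := isCompact_setOf_exists_mem_apply_eq isCompact_Icc
    (isCompact_stdSimplex ℝ ι) (by simp only [P]; fun_prop) x
  have h0 : 0 ∈ T := ⟨Set.left_mem_Icc.2 zero_le_one, by simpa [P, hc₀] using hx⟩
  obtain ⟨⟨-, ht₁⟩, v, hv, hvx⟩ := hT.sSup_mem ⟨0, h0⟩
  rcases exists_card_lt_or_affineIndependent hv hvx with ⟨t, htP, htcard, hxt⟩ | ⟨hind, hpos⟩
  · exact ⟨t, htP.trans (Set.range_subset_iff.2 (hPS _)), htcard, hxt⟩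
  exfalso
  have hlt : sSup T < 1 := ht₁.lt_of_ne fun h =>
    hi (hind.injective (by simp [P, h, hc₁, update_of_ne hi.symm]))
  let b : AffineBasis ι ℝ E :=
    ⟨P (sSup T), hind, hind.affineSpan_eq_top_iff_card_eq_finrank_add_one.2 hcard⟩
  have hev := eventually_exists_stdSimplex_sum_smul_update b hpos hv.2 (i₀ := i₀)
    (t := sSup T) hc.continuousAt (update_self i₀ _ z).symm
  have hb : ⇑b = P (sSup T) := rfl
  rw [hb, hvx] at hev
  obtain ⟨s, ⟨v', hv', hv'x⟩, hs⟩ :=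
    ((hev.filter_mono nhdsWithin_le_nhds).and (Ioc_mem_nhdsGT hlt)).exists
  have hsT : s ∈ T :=
    ⟨⟨(le_csSup hT.bddAbove h0).trans hs.1.le, hs.2⟩, v', hv', by simpa [P] using hv'x⟩
  exact not_lt_of_ge (le_csSup hT.bddAbove hsT) hs.1

theorem exists_finset_card_le_of_mem_convexHull_of_isPathConnected {S : Set E}
    (hS : IsPathConnected S) {x : E} (hx : x ∈ convexHull ℝ S) {d : ℕ} (hd : 1 ≤ d)
    (hdim : finrank ℝ E ≤ d) :
    ∃ t : Finset E, ↑t ⊆ S ∧ #t ≤ d ∧ x ∈ convexHull ℝ (t : Set E) := by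
  obtain ⟨ι, _, z, w, hzS, hz, hw₀, hw₁, hwx⟩ := eq_pos_convex_span_of_mem_convexHull hx
  have hι := hz.card_le_finrank_succ
  have hspan := Submodule.finrank_le (vectorSpan ℝ (Set.range z))
  rcases le_or_gt (Fintype.card ι) d with hιd | hιd
  · refine ⟨univ.image z, by simpa using hzS, card_image_le.trans hιd, ?_⟩
    exact hwx ▸ sum_smul_mem_convexHull_image _ _ (fun i _ => (hw₀ i).le) hw₁
  obtain ⟨i₀, i₁, hi⟩ := Fintype.exists_pair_of_one_lt_card (show 1 < Fintype.card ι by omega)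
  obtain ⟨γ, hγ⟩ := hS.joinedIn _ (hzS ⟨i₀, rfl⟩) _ (hzS ⟨i₁, rfl⟩)
  obtain ⟨t, htS, htcard, hxt⟩ := exists_finset_card_lt_of_update_path hi (by omega)
    (fun i => hzS ⟨i, rfl⟩) γ.continuous_extend (fun s => hγ _) γ.extend_zero γ.extend_one
    ⟨w, ⟨fun i => (hw₀ i).le, hw₁⟩, hwx⟩
  exact ⟨t, htS, by omega, hxt⟩

end FenchelEggleston

section Entropy

lemma neg_mul_logb_two_eq (x : ℝ) : -(x * Real.logb 2 x) = Real.negMulLog x / Real.log 2 := by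
  rw [Real.negMulLog, Real.logb]
  ring

lemma neg_mul_logb_two_mul (x y : ℝ) :
    -(x * y * Real.logb 2 (x * y)) = y * -(x * Real.logb 2 x) + x * -(y * Real.logb 2 y) := by
  simp only [neg_mul_logb_two_eq, Real.negMulLog_mul]
  ring

lemma sum_dist {α β : Type} [Fintype α] [Fintype β] (p : α → ℝ) (f : α → β) :
    ∑ b, dist p f b = ∑ a, p a := by
  unfold dist
  rw [Finset.sum_comm]
  simp

lemma continuous_H {α β : Type} [Fintype α] [Fintype β] (f : α → β) :
    Continuous fun p : α → ℝ => H p f := by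
  simp only [H, dist, neg_mul_logb_two_eq, ← Finset.sum_filter]
  fun_prop

end Entropy

section Mixture

variable {X Y U B : Type} [Fintype X] [Fintype Y] [Fintype U]

def mixture (w : U → ℝ) (ρ : U → X × Y → ℝ) : X × Y × U → ℝ :=
  fun a => w a.2.2 * ρ a.2.2 (a.1, a.2.1)

lemma sum_prod_prod_eq_sum_sum {M : Type*} [AddCommMonoid M] (f : X × Y × U → M) :
    ∑ a, f a = ∑ u, ∑ b : X × Y, f (b.1, b.2, u) := by
  rw [← (Equiv.prodAssoc X Y U).sum_comp, Fintype.sum_prod_type_right]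
  rfl

variable {w : U → ℝ} {ρ : U → X × Y → ℝ}

lemma dist_mixture_comp_cXY (g : X × Y → B) :
    dist (mixture w ρ) (fun a => g (cXY a)) = dist (∑ u, w u • ρ u) g := by
  ext c
  simp only [dist, mixture, cXY, sum_prod_prod_eq_sum_sum, Finset.sum_apply, Pi.smul_apply,
    smul_eq_mul]
  rw [Finset.sum_comm]
  simp [Finset.sum_ite_irrel]

lemma dist_mixture_cU (hρ : ∀ u, ∑ b, ρ u b = 1) : dist (mixture w ρ) cU = w := by
  ext u
  simp [dist, mixture, cU, sum_prod_prod_eq_sum_sum, ← Finset.mul_sum, hρ]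

lemma dist_mixture_pair (g : X × Y → B) (c : B) (u : U) :
    dist (mixture w ρ) (fun a => (g (cXY a), cU a)) (c, u) = w u * dist (ρ u) g c := by
  simp only [dist, mixture, cXY, cU, sum_prod_prod_eq_sum_sum, Prod.mk.injEq]
  rw [Fintype.sum_eq_single u fun v hv => by simp [hv], Finset.mul_sum]
  simp [mul_ite]

variable [Fintype B]

lemma H_mixture_pair (hρ : ∀ u, ∑ b, ρ u b = 1) (g : X × Y → B) :
    H (mixture w ρ) (fun a => (g (cXY a), cU a)) =
      H (mixture w ρ) cU + ∑ u, w u * H (ρ u) g := by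
  rw [H, Fintype.sum_prod_type, Finset.sum_comm]
  simp only [dist_mixture_pair, neg_mul_logb_two_mul, Finset.sum_add_distrib, ← Finset.sum_mul,
    sum_dist, hρ, one_mul, H, dist_mixture_cU hρ, Finset.mul_sum]

lemma I2_mixture (hρ : ∀ u, ∑ b, ρ u b = 1) (g : X × Y → B) :
    I2 (mixture w ρ) (fun a => g (cXY a)) cU = H (∑ u, w u • ρ u) g - ∑ u, w u * H (ρ u) g := by
  have hmarg : H (mixture w ρ) (fun a => g (cXY a)) = H (∑ u, w u • ρ u) g := by
    simp only [H, dist_mixture_comp_cXY]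
  rw [I2, H_mixture_pair hρ, hmarg]
  ring

lemma IsAux.exists_eq_mixture {p : X × Y → ℝ} {q : X × Y × U → ℝ} (hq : IsAux p q) :
    ∃ w ρ, w ∈ stdSimplex ℝ U ∧ (∀ u, ρ u ∈ stdSimplex ℝ (X × Y)) ∧ q = mixture w ρ := by
  set w : U → ℝ := fun u => ∑ b : X × Y, q (b.1, b.2, u)
  have hw₀ : ∀ u, 0 ≤ w u := fun u => Finset.sum_nonneg fun _ _ => hq.1.1 _
  have hp : p ∈ stdSimplex ℝ (X × Y) := by
    refine ⟨fun b => hq.2 b.1 b.2 ▸ Finset.sum_nonneg fun _ _ => hq.1.1 _, ?_⟩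
    rw [← hq.1.2, sum_prod_prod_eq_sum_sum, Finset.sum_comm]
    simp [hq.2]
  refine ⟨w, fun u => if w u = 0 then p else fun b => q (b.1, b.2, u) / w u,
    ⟨hw₀, by rw [← hq.1.2, sum_prod_prod_eq_sum_sum]⟩, fun u => ?_, ?_⟩
  · dsimp only
    split_ifs with h
    · exact hp
    · exact ⟨fun b => div_nonneg (hq.1.1 _) (hw₀ u), by rw [← Finset.sum_div, div_self h]⟩
  · ext ⟨x, y, u⟩
    simp only [mixture]
    split_ifs with h
    · simp [h, (Finset.sum_eq_zero_iff_of_nonneg fun _ _ => hq.1.1 _).1 h (x, y) (mem_univ _)]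
    · field_simp

lemma sum_apply_sum_smul_eq_one (hw : w ∈ stdSimplex ℝ U) (hρ : ∀ u, ρ u ∈ stdSimplex ℝ (X × Y)) :
    ∑ b, (∑ u, w u • ρ u) b = 1 := by
  simp [Finset.sum_apply, Finset.sum_comm (γ := X × Y), ← Finset.mul_sum, (hρ _).2, hw.2]

lemma isAux_mixture_iff {p : X × Y → ℝ} (hw : w ∈ stdSimplex ℝ U)
    (hρ : ∀ u, ρ u ∈ stdSimplex ℝ (X × Y)) : IsAux p (mixture w ρ) ↔ ∑ u, w u • ρ u = p := by
  have hpmf : IsPMF (mixture w ρ) := by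
    refine ⟨fun a => mul_nonneg (hw.1 _) ((hρ _).1 _), ?_⟩
    rw [sum_prod_prod_eq_sum_sum, ← sum_apply_sum_smul_eq_one hw hρ, Finset.sum_comm]
    simp [mixture, Finset.sum_apply]
  simp [IsAux, hpmf, funext_iff, Finset.sum_apply, mixture]

end Mixture

section CardinalityBound

variable {X Y U : Type} [Fintype X] [Fintype Y] [Fintype U]

def mutualInfoTriple (q : X × Y × U → ℝ) : ℝ × ℝ × ℝ := (I2 q cX cU, I2 q cY cU, I2 q cXY cU)

lemma mutualInfoTriple_mixture {w : U → ℝ} {ρ : U → X × Y → ℝ} (hρ : ∀ u, ∑ b, ρ u b = 1) :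
    mutualInfoTriple (mixture w ρ) =
      (H (∑ u, w u • ρ u) Prod.fst - ∑ u, w u * H (ρ u) Prod.fst,
        H (∑ u, w u • ρ u) Prod.snd - ∑ u, w u * H (ρ u) Prod.snd,
        H (∑ u, w u • ρ u) id - ∑ u, w u * H (ρ u) id) :=
  Prod.ext (I2_mixture hρ Prod.fst) (Prod.ext (I2_mixture hρ Prod.snd) (I2_mixture hρ id))

/-- On the simplex the dropped coordinate `a₀` is determined by the others, and dropping it
brings the dimension of the target down to `|𝒳| |𝒴| + 2`. -/
def coordsAndEntropies (a₀ : X × Y) (s : X × Y → ℝ) : ({a // a ≠ a₀} → ℝ) × ℝ × ℝ × ℝ :=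
  (fun a => s a, H s Prod.fst, H s Prod.snd, H s id)

lemma continuous_coordsAndEntropies (a₀ : X × Y) : Continuous (coordsAndEntropies a₀) :=
  (continuous_pi fun _ => continuous_apply _).prodMk
    ((continuous_H _).prodMk ((continuous_H _).prodMk (continuous_H _)))

lemma finrank_coordsAndEntropies (a₀ : X × Y) :
    finrank ℝ (({a // a ≠ a₀} → ℝ) × ℝ × ℝ × ℝ) = Fintype.card X * Fintype.card Y + 2 := by
  have : 0 < Fintype.card (X × Y) := Fintype.card_pos_iff.2 ⟨a₀⟩
  simp only [Fintype.card_prod] at this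
  simp [Fintype.card_subtype_compl]
  omega

lemma sum_smul_coordsAndEntropies {ι : Type*} [Fintype ι] (a₀ : X × Y) (v : ι → ℝ)
    (ρ : ι → X × Y → ℝ) :
    ∑ i, v i • coordsAndEntropies a₀ (ρ i) =
      (fun a : {a // a ≠ a₀} => (∑ i, v i • ρ i) a, ∑ i, v i * H (ρ i) Prod.fst,
        ∑ i, v i * H (ρ i) Prod.snd, ∑ i, v i * H (ρ i) id) := by
  ext <;> simp [coordsAndEntropies, Prod.fst_sum, Prod.snd_sum, Finset.sum_apply]

variable {w : U → ℝ} {ρ : U → X × Y → ℝ}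

lemma exists_card_le_sum_smul_coordsAndEntropies_eq (a₀ : X × Y) (hw : w ∈ stdSimplex ℝ U)
    (hρ : ∀ u, ρ u ∈ stdSimplex ℝ (X × Y)) :
    ∃ (U' : Type) (_ : Fintype U') (w' : U' → ℝ) (ρ' : U' → X × Y → ℝ),
      Fintype.card U' ≤ Fintype.card X * Fintype.card Y + 2 ∧ w' ∈ stdSimplex ℝ U' ∧
      (∀ u, ρ' u ∈ stdSimplex ℝ (X × Y)) ∧
      ∑ u, w' u • coordsAndEntropies a₀ (ρ' u) = ∑ u, w u • coordsAndEntropies a₀ (ρ u) := by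
  set C := coordsAndEntropies a₀
  have hS : IsPathConnected (C '' stdSimplex ℝ (X × Y)) :=
    ((convex_stdSimplex ℝ _).isPathConnected ⟨_, single_mem_stdSimplex ℝ a₀⟩).image
      (continuous_coordsAndEntropies a₀)
  have hm : ∑ u, w u • C (ρ u) ∈ convexHull ℝ (C '' stdSimplex ℝ (X × Y)) :=
    (convex_convexHull ℝ _).sum_mem (fun u _ => hw.1 u) hw.2 fun u _ =>
      subset_convexHull ℝ _ ⟨ρ u, hρ u, rfl⟩
  obtain ⟨t, htS, htcard, hmt⟩ := exists_finset_card_le_of_mem_convexHull_of_isPathConnected hS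
    hm (by omega) (finrank_coordsAndEntropies a₀).le
  obtain ⟨v, hv₀, hv₁, hvm⟩ := Finset.mem_convexHull'.1 hmt
  choose ρ' hρ' hCρ' using fun e : t => htS e.2
  refine ⟨t, inferInstance, fun e => v e, ρ', by simpa using htcard,
    ⟨fun e => hv₀ e e.2, by rwa [Finset.sum_coe_sort t v]⟩, hρ', ?_⟩
  simp only [hCρ']
  rw [Finset.sum_coe_sort t (fun e => v e • e), hvm]

lemma sum_smul_eq_and_mutualInfoTriple_eq {U' : Type} [Fintype U'] {w' : U' → ℝ}
    {ρ' : U' → X × Y → ℝ} {a₀ : X × Y} (hw : w ∈ stdSimplex ℝ U) (hw' : w' ∈ stdSimplex ℝ U')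
    (hρ : ∀ u, ρ u ∈ stdSimplex ℝ (X × Y)) (hρ' : ∀ u, ρ' u ∈ stdSimplex ℝ (X × Y))
    (h : ∑ u, w' u • coordsAndEntropies a₀ (ρ' u) = ∑ u, w u • coordsAndEntropies a₀ (ρ u)) :
    ∑ u, w' u • ρ' u = ∑ u, w u • ρ u ∧
      mutualInfoTriple (mixture w' ρ') = mutualInfoTriple (mixture w ρ) := by
  simp only [sum_smul_coordsAndEntropies, Prod.mk.injEq] at h
  obtain ⟨hcoord, h₁, h₂, h₃⟩ := h
  have hmix : ∑ u, w' u • ρ' u = ∑ u, w u • ρ u := eq_of_sum_eq_of_forall_ne a₀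
    (by rw [sum_apply_sum_smul_eq_one hw hρ, sum_apply_sum_smul_eq_one hw' hρ'])
    fun a ha => congrFun hcoord ⟨a, ha⟩
  refine ⟨hmix, ?_⟩
  rw [mutualInfoTriple_mixture fun u => (hρ' u).2, mutualInfoTriple_mixture fun u => (hρ u).2,
    hmix, h₁, h₂, h₃]

end CardinalityBound

theorem stmt8_general {X Y : Type} [Fintype X] [Fintype Y] (p : X × Y → ℝ) :
    MIRegion p =
      { v | ∃ (U : Type) (_ : Fintype U) (q : X × Y × U → ℝ),
          Fintype.card U ≤ Fintype.card X * Fintype.card Y + 2 ∧ IsAux p q ∧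
          v = (I2 q cX cU, I2 q cY cU, I2 q cXY cU) } := by
  ext v
  constructor
  · rintro ⟨U, _, q, hq, rfl⟩
    obtain ⟨⟨x, y, -⟩, -⟩ := Finset.nonempty_of_sum_ne_zero (hq.1.2 ▸ one_ne_zero)
    obtain ⟨w, ρ, hw, hρ, rfl⟩ := hq.exists_eq_mixture
    obtain ⟨U', _, w', ρ', hcard, hw', hρ', h⟩ :=
      exists_card_le_sum_smul_coordsAndEntropies_eq (x, y) hw hρ
    obtain ⟨hmix, hmi⟩ := sum_smul_eq_and_mutualInfoTriple_eq hw hw' hρ hρ' h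
    refine ⟨U', _, mixture w' ρ', hcard, ?_, hmi.symm⟩
    exact (isAux_mixture_iff hw' hρ').2 (hmix.trans ((isAux_mixture_iff hw hρ).1 hq))
  · rintro ⟨U, _, q, -, hq, rfl⟩
    exact ⟨U, _, q, hq, rfl⟩

/-- cardinality bound: every point of `𝓘_{XY}` is achieved by an auxiliary
random variable whose range has at most `|𝒳|·|𝒴| + 2` elements. -/
theorem stmt8 {X Y : Type} [Fintype X] [Fintype Y] (p : X × Y → ℝ) (hp : IsPMF p) :
    MIRegion p =
      { v | ∃ (U : Type) (_ : Fintype U) (q : X × Y × U → ℝ),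
          Fintype.card U ≤ Fintype.card X * Fintype.card Y + 2 ∧ IsAux p q ∧
          v = (I2 q cX cU, I2 q cY cU, I2 q cXY cU) } :=
  stmt8_general p

end GW
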